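/- arXiv:2401.12917 — 4 statements merged into one kernel-verified Lean document; each statement's English description precedes it below -/
import Mathlib

section
/- Let S, O, A be nonempty finite types, f : S → O and g : S → A functions, and p : S × O × A → ℝ a probability mass function such that p(s,o,a) = 0 whenever o ≠ f(s) or a ≠ g(s). Fix a ∈ A with p_A(a) := ∑_{s,o} p(s,o,a) > 0. Then −log p_A(a) = ∑_{s,o} p(s,o ∣ a) · ( log p(s ∣ a) − log p_{SO}(s,o) ), where p(s,o ∣ a) := p(s,o,a)/p_A(a), p(s ∣ a) := (∑_{o'} p(s,o',a))/p_A(a), p_{SO}(s,o) := ∑_{a'} p(s,o,a') is the joint marginal of (s,o), and summands with p(s,o ∣ a) = 0 are taken to be 0. -/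
/-!
For a precise agent, a point `(s, o)` in the support of `p(·, · ∣ a)` has `o = f s` and
`a = g s`, so both `∑ o', p(s, o', a)` and `∑ a', p(s, o, a')` reduce to the single term
`p(s, o, a)`. The integrand `log p(s ∣ a) − log p(s, o)` is therefore the constant
`−log p_A(a)` on that support, and so is its expectation.
-/

open Finset

lemma sum_div_sum_mul_eq_of_eq_on_support {ι : Type*} [Fintype ι] (w h : ι → ℝ) (c : ℝ)
    (hw : ∑ i, w i ≠ 0) (hh : ∀ i, w i ≠ 0 → h i = c) :
    ∑ i, w i / (∑ j, w j) * h i = c := by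
  calc ∑ i, w i / (∑ j, w j) * h i
      = ∑ i, w i / (∑ j, w j) * c :=
        sum_congr rfl fun i _ => by
          rcases eq_or_ne (w i) 0 with h0 | h0
          · simp [h0]
          · rw [hh i h0]
    _ = c := by rw [← sum_mul, ← sum_div, div_self hw, one_mul]

section

variable {S O A : Type*}

def PreciseAgent (f : S → O) (g : S → A) (p : S × O × A → ℝ) : Prop :=
  ∀ s o a, o ≠ f s ∨ a ≠ g s → p (s, o, a) = 0

variable {f : S → O} {g : S → A} {p : S × O × A → ℝ}

namespace PreciseAgent

lemma eq_of_ne_zero (hp : PreciseAgent f g p) {s : S} {o : O} {a : A}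
    (h : p (s, o, a) ≠ 0) : o = f s ∧ a = g s := by
  by_contra hne
  exact h (hp s o a (not_and_or.mp hne))

lemma sum_obs_eq [Fintype O] (hp : PreciseAgent f g p) {s : S} {o : O} {a : A}
    (h : p (s, o, a) ≠ 0) :
    ∑ o', p (s, o', a) = p (s, o, a) :=
  Fintype.sum_eq_single o fun o' ho' =>
    hp s o' a (Or.inl ((hp.eq_of_ne_zero h).1 ▸ ho'))

lemma sum_act_eq [Fintype A] (hp : PreciseAgent f g p) {s : S} {o : O} {a : A}
    (h : p (s, o, a) ≠ 0) :
    ∑ a', p (s, o, a') = p (s, o, a) :=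
  Fintype.sum_eq_single a fun a' ha' =>
    hp s o a' (Or.inr ((hp.eq_of_ne_zero h).2 ▸ ha'))

lemma log_cond_sub_log_joint [Fintype O] [Fintype A] (hp : PreciseAgent f g p)
    {s : S} {o : O} {a : A} {P : ℝ} (hP : P ≠ 0) (h : p (s, o, a) ≠ 0) :
    Real.log ((∑ o', p (s, o', a)) / P) - Real.log (∑ a', p (s, o, a')) = -Real.log P := by
  rw [hp.sum_obs_eq h, hp.sum_act_eq h, Real.log_div h hP]
  ring

end PreciseAgent

end

theorem stmt4_general (S O A : Type*) [Fintype S] [Fintype O] [Fintype A]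
    (f : S → O) (g : S → A)
    (p : S × O × A → ℝ)
    (hdet : ∀ s o a, o ≠ f s ∨ a ≠ g s → p (s, o, a) = 0)
    (a : A) (hpa : 0 < ∑ s, ∑ o, p (s, o, a)) :
    -Real.log (∑ s, ∑ o, p (s, o, a)) =
      ∑ s, ∑ o, (p (s, o, a) / (∑ s', ∑ o', p (s', o', a))) *
        (Real.log ((∑ o', p (s, o', a)) / (∑ s', ∑ o', p (s', o', a))) -
          Real.log (∑ a', p (s, o, a'))) := by
  have hprecise : PreciseAgent f g p := hdet
  simp only [← Fintype.sum_prod_type'] at hpa ⊢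
  exact (sum_div_sum_mul_eq_of_eq_on_support _ _ _ hpa.ne' fun x hx =>
    hprecise.log_cond_sub_log_joint hpa.ne' hx).symm

/-- expected free energy identity: under the precise-agent
assumption, the negative log marginal probability of a decision `a` equals the
expectation under the prediction `p(s,o ∣ a)` of `log p(s ∣ a) − log p(s,o)`.
Summands vanish where `p(s,o ∣ a) = 0` since they carry that factor. -/
theorem stmt4 (S O A : Type*) [Fintype S] [Fintype O] [Fintype A]
    [Nonempty S] [Nonempty O] [Nonempty A]
    (f : S → O) (g : S → A)
    (p : S × O × A → ℝ) (hp : ∀ x, 0 ≤ p x) (hsum : ∑ x, p x = 1)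
    (hdet : ∀ s o a, o ≠ f s ∨ a ≠ g s → p (s, o, a) = 0)
    (a : A) (hpa : 0 < ∑ s, ∑ o, p (s, o, a)) :
    -Real.log (∑ s, ∑ o, p (s, o, a)) =
      ∑ s, ∑ o, (p (s, o, a) / (∑ s', ∑ o', p (s', o', a))) *
        (Real.log ((∑ o', p (s, o', a)) / (∑ s', ∑ o', p (s', o', a))) -
          Real.log (∑ a', p (s, o, a'))) :=
  stmt4_general S O A f g p hdet a hpa
end

section
/- Let S, O, A be nonempty finite types, f : S → O and g : S → A functions, and p : S × O × A → ℝ a probability mass function such that p(s,o,a) = 0 whenever o ≠ f(s) or a ≠ g(s). Fix a ∈ A with p_A(a) := ∑_{s,o} p(s,o,a) > 0. Then −log p_A(a) = D_{KL}( p(· ∣ a) ∥ p_S ) + ∑_{s} p(s ∣ a) · H( p(· ∣ s) ), where p(s ∣ a) := (∑_{o} p(s,o,a))/p_A(a) is the predicted state distribution, p_S(s) := ∑_{o,a'} p(s,o,a') is the marginal state distribution, p(o ∣ s) := (∑_{a'} p(s,o,a'))/p_S(s) is the conditional observation distribution (defined when p_S(s) > 0), D_{KL}(q ∥ r) := ∑_{s}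 q(s) log( q(s)/r(s) ) with summands 0 when q(s) = 0, and H(q) := −∑_{o} q(o) log q(o) with summands 0 when q(o) = 0. -/
/-!
For a precise agent every state `s` determines its observation `f s` and action `g s`, so the
conditional observation distribution `p(· ∣ s)` is a point mass and the ambiguity vanishes.
Likewise `∑ₒ p(s,o,a)` is either `0` or the whole state marginal `p_S(s)`, so every nonzero
summand of the risk has `log (p(s ∣ a) / p_S(s)) = -log p_A(a)`, and the risk is `-log p_A(a)`.
-/

open Finset Real

lemma sum_div_mul_log_div_eq_zero_of_eq_zero_of_ne {ι : Type*} [Fintype ι] (q : ι → ℝ)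
    (i₀ : ι) (hq : ∀ i ≠ i₀, q i = 0) :
    ∑ i, q i / (∑ j, q j) * log (q i / ∑ j, q j) = 0 := by
  rw [Fintype.sum_eq_single i₀ hq]
  refine Fintype.sum_eq_zero _ fun i => ?_
  rcases eq_or_ne i i₀ with rfl | hi
  · rcases eq_or_ne (q i) 0 with h | h <;> simp [h]
  · simp [hq i hi]

lemma div_mul_log_div_div_eq_of_eq_zero_or_eq {x y c : ℝ} (h : x = 0 ∨ x = y) :
    x / c * log (x / c / y) = x / c * -log c := by
  rcases h with rfl | rfl
  · simp
  rcases eq_or_ne x 0 with rfl | hx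
  · simp
  rw [div_div_cancel_left' hx, log_inv]

section PreciseAgent

variable {S O A : Type*} {f : S → O} {g : S → A} {p : S × O × A → ℝ}

def IsPreciseAgent (f : S → O) (g : S → A) (p : S × O × A → ℝ) : Prop :=
  ∀ s o a, o ≠ f s ∨ a ≠ g s → p (s, o, a) = 0

lemma sum_obs_eq_apply [Fintype O] (hdet : IsPreciseAgent f g p) (s : S) (b : A) :
    ∑ o, p (s, o, b) = p (s, f s, b) :=
  Fintype.sum_eq_single (f s) fun o ho => hdet s o b (Or.inl ho)

lemma sum_act_eq_zero_of_ne [Fintype A] (hdet : IsPreciseAgent f g p) {s : S} {o : O}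
    (ho : o ≠ f s) : ∑ a', p (s, o, a') = 0 :=
  Fintype.sum_eq_zero _ fun b => hdet s o b (Or.inl ho)

lemma sum_obs_act_eq_apply [Fintype O] [Fintype A] (hdet : IsPreciseAgent f g p) (s : S) :
    ∑ o, ∑ a', p (s, o, a') = p (s, f s, g s) := by
  rw [Fintype.sum_eq_single (f s) fun o ho => sum_act_eq_zero_of_ne hdet ho]
  exact Fintype.sum_eq_single (g s) fun b hb => hdet s (f s) b (Or.inr hb)

lemma sum_obs_eq_zero_or_eq_sum_obs_act [Fintype O] [Fintype A]
    (hdet : IsPreciseAgent f g p) (s : S) (b : A) :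
    ∑ o, p (s, o, b) = 0 ∨ ∑ o, p (s, o, b) = ∑ o, ∑ a', p (s, o, a') := by
  rw [sum_obs_eq_apply hdet, sum_obs_act_eq_apply hdet]
  rcases eq_or_ne b (g s) with rfl | hb
  · exact Or.inr rfl
  · exact Or.inl (hdet s (f s) b (Or.inr hb))

end PreciseAgent

theorem stmt5_general (S O A : Type*) [Fintype S] [Fintype O] [Fintype A]
    (f : S → O) (g : S → A)
    (p : S × O × A → ℝ)
    (hdet : ∀ s o a, o ≠ f s ∨ a ≠ g s → p (s, o, a) = 0)
    (a : A) (hpa : 0 < ∑ s, ∑ o, p (s, o, a)) :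
    -Real.log (∑ s, ∑ o, p (s, o, a)) =
      (∑ s, ((∑ o, p (s, o, a)) / (∑ s', ∑ o', p (s', o', a))) *
          Real.log (((∑ o, p (s, o, a)) / (∑ s', ∑ o', p (s', o', a))) /
            (∑ o, ∑ a', p (s, o, a')))) +
      ∑ s, ((∑ o, p (s, o, a)) / (∑ s', ∑ o', p (s', o', a))) *
        (-∑ o, ((∑ a', p (s, o, a')) / (∑ o', ∑ a', p (s, o', a'))) *
            Real.log ((∑ a', p (s, o, a')) / (∑ o', ∑ a', p (s, o', a')))) := by
  have ambiguity (s : S) :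
      ∑ o, (∑ a', p (s, o, a')) / (∑ o', ∑ a', p (s, o', a')) *
        log ((∑ a', p (s, o, a')) / (∑ o', ∑ a', p (s, o', a'))) = 0 :=
    sum_div_mul_log_div_eq_zero_of_eq_zero_of_ne _ (f s) fun o ho => sum_act_eq_zero_of_ne hdet ho
  have risk (s : S) :=
    div_mul_log_div_div_eq_of_eq_zero_or_eq (c := ∑ s', ∑ o', p (s', o', a))
      (sum_obs_eq_zero_or_eq_sum_obs_act hdet s a)
  simp_rw [ambiguity, risk, neg_zero, mul_zero, sum_const_zero, add_zero, ← sum_mul, ← sum_div,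
    div_self hpa.ne', one_mul]

/-- risk–ambiguity decomposition: under the precise-agent
assumption, `−log p_A(a)` equals the KL divergence between the predicted state
distribution `p(· ∣ a)` and the marginal state distribution `p_S` (the risk),
plus the expected entropy of observations given states (the ambiguity).
Summands of the KL divergence and of the entropy vanish where the corresponding
probability vanishes, since they carry that probability as a factor. -/
theorem stmt5 (S O A : Type*) [Fintype S] [Fintype O] [Fintype A]
    [Nonempty S] [Nonempty O] [Nonempty A]
    (f : S → O) (g : S → A)
    (p : S × O × A → ℝ) (hp : ∀ x, 0 ≤ p x) (hsum : ∑ x, p x = 1)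
    (hdet : ∀ s o a, o ≠ f s ∨ a ≠ g s → p (s, o, a) = 0)
    (a : A) (hpa : 0 < ∑ s, ∑ o, p (s, o, a)) :
    -Real.log (∑ s, ∑ o, p (s, o, a)) =
      (∑ s, ((∑ o, p (s, o, a)) / (∑ s', ∑ o', p (s', o', a))) *
          Real.log (((∑ o, p (s, o, a)) / (∑ s', ∑ o', p (s', o', a))) /
            (∑ o, ∑ a', p (s, o, a')))) +
      ∑ s, ((∑ o, p (s, o, a)) / (∑ s', ∑ o', p (s', o', a))) *
        (-∑ o, ((∑ a', p (s, o, a')) / (∑ o', ∑ a', p (s, o', a'))) *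
            Real.log ((∑ a', p (s, o, a')) / (∑ o', ∑ a', p (s, o', a')))) :=
  stmt5_general S O A f g p hdet a hpa
end

section
/- Let S, O, A be nonempty finite types, f : S → O and g : S → A functions, and p : S × O × A → ℝ a probability mass function such that p(s,o,a) = 0 whenever o ≠ f(s) or a ≠ g(s). Fix a ∈ A with p_A(a) := ∑_{s,o} p(s,o,a) > 0, and assume that the marginal p_O(o) := ∑_{s,a'} p(s,o,a') is positive for every o with p(o ∣ a) := (∑_{s} p(s,o,a))/p_A(a) > 0. Then −log p_A(a) = −∑_{o} p(o ∣ a) log p_O(o) − ∑_{o} p(o ∣ a) · D_{KL}( p(· ∣ o, a) ∥ p(· ∣ a) ) + ∑_{o} p(o ∣ a) · D_{KL}( p(· ∣ o, a) ∥ p(· ∣ o) ), where p(s ∣ o, a) := p(s,o,a)/∑_{s'} p(s',o,a), p(s ∣ a) := (∑_{o'} p(s,o',a))/p_A(a), p(s ∣ o) := (∑_{a'} p(s,o,a'))/p_O(o), D_{KL}(q ∥ r) := ∑_{s} q(s) log( q(s)/r(s) ) with summands 0 when q(s) = 0, and each outer summand is 0 when p(o ∣ a) = 0. -/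
/-!
Under the precise-agent assumption, on the support of `p(· ∣ o, a)` both marginals
`∑ o', p (s, o', a)` and `∑ a', p (s, o, a')` collapse to `p (s, o, a)`. Hence the ratios of
`p(· ∣ o, a)` to `p(· ∣ a)` and to `p(· ∣ o)` are constant in `s`, and the two divergences are
just `log (p_A(a) / p(o, a))` and `log (p_O(o) / p(o, a))`. For every `o` with `p(o ∣ a) > 0`
the three terms therefore telescope to `-log p_A(a)`, and the weights `p(o ∣ a)` sum to one.
-/

open Finset Real

theorem sum_mul_log_div_eq_log_of_div_eq {ι : Type*} [Fintype ι] {q r : ι → ℝ} {c : ℝ}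
    (hq : ∑ i, q i = 1) (hqr : ∀ i, q i ≠ 0 → q i / r i = c) :
    ∑ i, q i * log (q i / r i) = log c := by
  calc ∑ i, q i * log (q i / r i) = ∑ i, q i * log c := by
        refine sum_congr rfl fun i _ => ?_
        rcases eq_or_ne (q i) 0 with hi | hi
        · simp [hi]
        · rw [hqr i hi]
    _ = log c := by rw [← sum_mul, hq, one_mul]

theorem sum_div_mul_log_div_div_eq_log {ι : Type*} [Fintype ι] {u v : ι → ℝ} {N : ℝ}
    (hu : ∑ i, u i ≠ 0) (huv : ∀ i, u i ≠ 0 → v i = u i) :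
    ∑ i, u i / (∑ j, u j) * log (u i / (∑ j, u j) / (v i / N)) = log (N / ∑ j, u j) := by
  refine sum_mul_log_div_eq_log_of_div_eq ?_ fun i hi => ?_
  · rw [← sum_div, div_self hu]
  · have hi' : u i ≠ 0 := fun h => hi (by simp [h])
    rw [huv i hi', div_div_div_cancel_left' _ _ hi']

section PreciseAgent

variable {S O A : Type*} {f : S → O} {g : S → A} {p : S × O × A → ℝ}

theorem sum_obs_eq_of_ne_zero [Fintype O]
    (hdet : ∀ s o a, o ≠ f s ∨ a ≠ g s → p (s, o, a) = 0) {s : S} {o : O} {a : A}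
    (h : p (s, o, a) ≠ 0) : ∑ o', p (s, o', a) = p (s, o, a) := by
  have ho : o = f s := by_contra fun hne => h (hdet s o a (Or.inl hne))
  refine Fintype.sum_eq_single o fun o' ho' => hdet s o' a (Or.inl ?_)
  rwa [← ho]

theorem sum_act_eq_of_ne_zero [Fintype A]
    (hdet : ∀ s o a, o ≠ f s ∨ a ≠ g s → p (s, o, a) = 0) {s : S} {o : O} {a : A}
    (h : p (s, o, a) ≠ 0) : ∑ a', p (s, o, a') = p (s, o, a) := by
  have ha : a = g s := by_contra fun hne => h (hdet s o a (Or.inr hne))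
  refine Fintype.sum_eq_single a fun a' ha' => hdet s o a' (Or.inr ?_)
  rwa [← ha]

end PreciseAgent

theorem stmt6_general (S O A : Type*) [Fintype S] [Fintype O] [Fintype A]
    (f : S → O) (g : S → A)
    (p : S × O × A → ℝ) (hp : ∀ x, 0 ≤ p x)
    (hdet : ∀ s o a, o ≠ f s ∨ a ≠ g s → p (s, o, a) = 0)
    (a : A) (hpa : 0 < ∑ s, ∑ o, p (s, o, a))
    (hO : ∀ o : O, 0 < (∑ s, p (s, o, a)) / (∑ s', ∑ o', p (s', o', a)) →
      0 < ∑ s, ∑ a', p (s, o, a')) :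
    -Real.log (∑ s, ∑ o, p (s, o, a)) =
      -(∑ o, ((∑ s, p (s, o, a)) / (∑ s', ∑ o', p (s', o', a))) *
          Real.log (∑ s, ∑ a', p (s, o, a')))
      - (∑ o, ((∑ s, p (s, o, a)) / (∑ s', ∑ o', p (s', o', a))) *
          (∑ s, (p (s, o, a) / (∑ s', p (s', o, a))) *
            Real.log ((p (s, o, a) / (∑ s', p (s', o, a))) /
              ((∑ o', p (s, o', a)) / (∑ s', ∑ o', p (s', o', a))))))
      + ∑ o, ((∑ s, p (s, o, a)) / (∑ s', ∑ o', p (s', o', a))) *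
          (∑ s, (p (s, o, a) / (∑ s', p (s', o, a))) *
            Real.log ((p (s, o, a) / (∑ s', p (s', o, a))) /
              ((∑ a', p (s, o, a')) / (∑ s', ∑ a', p (s', o, a'))))) := by
  set PA := ∑ s, ∑ o, p (s, o, a)
  have hweights : ∑ o, (∑ s, p (s, o, a)) / PA = 1 := by
    rw [← sum_div, sum_comm, div_self hpa.ne']
  rw [← sum_neg_distrib, ← sum_sub_distrib, ← sum_add_distrib]
  calc -log PA = ∑ o, (∑ s, p (s, o, a)) / PA * -log PA := by
        rw [← sum_mul, hweights, one_mul]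
    _ = _ := sum_congr rfl fun o _ => ?_
  set Z := ∑ s, p (s, o, a)
  rcases (show 0 ≤ Z from sum_nonneg fun s _ => hp (s, o, a)).eq_or_lt with hZ | hZ
  · simp [← hZ]
  have hpO := hO o (div_pos hZ hpa)
  rw [sum_div_mul_log_div_div_eq_log hZ.ne' fun s => sum_obs_eq_of_ne_zero hdet,
    sum_div_mul_log_div_div_eq_log hZ.ne' fun s => sum_act_eq_of_ne_zero hdet,
    log_div hpa.ne' hZ.ne', log_div hpO.ne' hZ.ne']
  ring

/-- three-term decomposition of expected free energy: under the
precise-agent assumption, and provided the observation marginal `p_O(o)` is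
positive whenever `p(o ∣ a) > 0`, `−log p_A(a)` equals negative extrinsic value
minus intrinsic value plus a residual expected KL divergence between the
posteriors `p(· ∣ o, a)` and `p(· ∣ o)`.  All summands vanish where the
probability weighting them vanishes, since they carry it as a factor. -/
theorem stmt6 (S O A : Type*) [Fintype S] [Fintype O] [Fintype A]
    [Nonempty S] [Nonempty O] [Nonempty A]
    (f : S → O) (g : S → A)
    (p : S × O × A → ℝ) (hp : ∀ x, 0 ≤ p x) (hsum : ∑ x, p x = 1)
    (hdet : ∀ s o a, o ≠ f s ∨ a ≠ g s → p (s, o, a) = 0)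
    (a : A) (hpa : 0 < ∑ s, ∑ o, p (s, o, a))
    (hO : ∀ o : O, 0 < (∑ s, p (s, o, a)) / (∑ s', ∑ o', p (s', o', a)) →
      0 < ∑ s, ∑ a', p (s, o, a')) :
    -Real.log (∑ s, ∑ o, p (s, o, a)) =
      -(∑ o, ((∑ s, p (s, o, a)) / (∑ s', ∑ o', p (s', o', a))) *
          Real.log (∑ s, ∑ a', p (s, o, a')))
      - (∑ o, ((∑ s, p (s, o, a)) / (∑ s', ∑ o', p (s', o', a))) *
          (∑ s, (p (s, o, a) / (∑ s', p (s', o, a))) *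
            Real.log ((p (s, o, a) / (∑ s', p (s', o, a))) /
              ((∑ o', p (s, o', a)) / (∑ s', ∑ o', p (s', o', a))))))
      + ∑ o, ((∑ s, p (s, o, a)) / (∑ s', ∑ o', p (s', o', a))) *
          (∑ s, (p (s, o, a) / (∑ s', p (s', o, a))) *
            Real.log ((p (s, o, a) / (∑ s', p (s', o, a))) /
              ((∑ a', p (s, o, a')) / (∑ s', ∑ a', p (s', o, a'))))) :=
  stmt6_general S O A f g p hp hdet a hpa hO
end

section
/- Let S, O, A be nonempty finite types, f : S → O and g : S → A functions, and p : S × O × A → ℝ a probability mass function such that p(s,o,a) = 0 whenever o ≠ f(s) or a ≠ g(s). Fix a ∈ A with p_A(a) := ∑_{s,o} p(s,o,a) > 0, and assume that the marginal p_O(o) := ∑_{s,a'} p(s,o,a') is positive for every o with p(o ∣ a) := (∑_{s} p(s,o,a))/p_A(a) > 0. Then −log p_A(a) ≥ −∑_{o} p(o ∣ a) log p_O(o) − ∑_{o} p(o ∣ a) · D_{KL}( p(· ∣ o, a) ∥ p(· ∣ a) ), where p(s ∣ o, a) := p(s,o,a)/∑_{s'} p(s',o,a), p(s ∣ a) :=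 (∑_{o'} p(s,o',a))/p_A(a), D_{KL}(q ∥ r) := ∑_{s} q(s) log( q(s)/r(s) ) with summands 0 when q(s) = 0, and each outer summand is 0 when p(o ∣ a) = 0. -/
/-!
Because the observation is a function of the state, the row sum `∑ o', p(s, o', a)` equals
`p(s, o, a)` wherever the latter is nonzero. Hence every posterior `p(· ∣ o, a)` differs from the
prior `p(· ∣ a)` by the constant factor `p_A(a) / p(o, a)` on its support, and its divergence is
`log p_A(a) - log p(o, a)`. After averaging over `p(o ∣ a)` the claim reduces to
`∑ₒ p(o ∣ a) log p(o, a) ≤ ∑ₒ p(o ∣ a) log p_O(o)`, which holds termwise as `p(o, a) ≤ p_O(o)`.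
-/

open Finset Real

theorem sum_div_mul_log_div_div_eq_log_sub_log {ι : Type*} [Fintype ι] (w r : ι → ℝ) {P : ℝ}
    (hP : P ≠ 0) (hw : ∑ j, w j ≠ 0) (hwr : ∀ i, w i ≠ 0 → r i = w i) :
    ∑ i, w i / (∑ j, w j) * log (w i / (∑ j, w j) / (r i / P)) = log P - log (∑ j, w j) := by
  have hterm : ∀ i, w i / (∑ j, w j) * log (w i / (∑ j, w j) / (r i / P))
      = w i / (∑ j, w j) * (log P - log (∑ j, w j)) := by
    intro i
    by_cases hi : w i = 0
    · simp [hi]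
    · rw [hwr i hi, ← log_div hP hw]
      congr 2
      field_simp
  rw [sum_congr rfl fun i _ => hterm i, ← sum_mul, ← sum_div, div_self hw, one_mul]

section GraphSupport

variable {S O : Type*} [Fintype S] [Fintype O] {w : S → O → ℝ} {f : S → O}

theorem sum_div_mul_log_eq_log_sub_log_of_supp_graph (hwf : ∀ s o, o ≠ f s → w s o = 0) (o : O)
    (hP : ∑ s', ∑ o', w s' o' ≠ 0) (hn : ∑ s', w s' o ≠ 0) :
    ∑ s, w s o / (∑ s', w s' o) *
        log (w s o / (∑ s', w s' o) / ((∑ o', w s o') / ∑ s', ∑ o', w s' o'))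
      = log (∑ s', ∑ o', w s' o') - log (∑ s', w s' o) := by
  refine sum_div_mul_log_div_div_eq_log_sub_log (fun s => w s o) _ hP hn fun s hs => ?_
  have hfs : o = f s := by
    by_contra h
    exact hs (hwf s o h)
  exact sum_eq_single o (fun o' _ ho' => hwf s o' (hfs ▸ ho')) (absurd (mem_univ o))

theorem div_mul_log_le_add_of_supp_graph (hw0 : ∀ s o, 0 ≤ w s o)
    (hwf : ∀ s o, o ≠ f s → w s o = 0) (hP : 0 < ∑ s', ∑ o', w s' o') (o : O) {y : ℝ}
    (hy : ∑ s, w s o ≤ y) :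
    (∑ s, w s o) / (∑ s', ∑ o', w s' o') * log (∑ s', ∑ o', w s' o')
      ≤ (∑ s, w s o) / (∑ s', ∑ o', w s' o') * log y
        + (∑ s, w s o) / (∑ s', ∑ o', w s' o') *
          ∑ s, w s o / (∑ s', w s' o) *
            log (w s o / (∑ s', w s' o) / ((∑ o', w s o') / ∑ s', ∑ o', w s' o')) := by
  rcases (sum_nonneg fun s _ => hw0 s o : 0 ≤ ∑ s, w s o).eq_or_lt with hn | hn
  · rw [← hn]
    simp
  · rw [sum_div_mul_log_eq_log_sub_log_of_supp_graph hwf o hP.ne' hn.ne']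
    have hlog := mul_le_mul_of_nonneg_left (log_le_log hn hy) (div_pos hn hP).le
    linarith

end GraphSupport

theorem stmt7_general (S O A : Type*) [Fintype S] [Fintype O] [Fintype A]
    (f : S → O) (g : S → A)
    (p : S × O × A → ℝ) (hp : ∀ x, 0 ≤ p x)
    (hdet : ∀ s o a, o ≠ f s ∨ a ≠ g s → p (s, o, a) = 0)
    (a : A) (hpa : 0 < ∑ s, ∑ o, p (s, o, a)) :
    -Real.log (∑ s, ∑ o, p (s, o, a)) ≥
      -(∑ o, ((∑ s, p (s, o, a)) / (∑ s', ∑ o', p (s', o', a))) *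
          Real.log (∑ s, ∑ a', p (s, o, a')))
      - ∑ o, ((∑ s, p (s, o, a)) / (∑ s', ∑ o', p (s', o', a))) *
          (∑ s, (p (s, o, a) / (∑ s', p (s', o, a))) *
            Real.log ((p (s, o, a) / (∑ s', p (s', o, a))) /
              ((∑ o', p (s, o', a)) / (∑ s', ∑ o', p (s', o', a))))) := by
  have hweights : ∑ o, (∑ s, p (s, o, a)) / (∑ s', ∑ o', p (s', o', a)) = 1 := by
    rw [← sum_div, sum_comm, div_self hpa.ne']
  have hjoint_le_marginal : ∀ o, ∑ s, p (s, o, a) ≤ ∑ s, ∑ a', p (s, o, a') := fun o =>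
    sum_le_sum fun s _ => single_le_sum (fun a' _ => hp (s, o, a')) (mem_univ a)
  have hterm := fun o => div_mul_log_le_add_of_supp_graph (w := fun s o => p (s, o, a))
    (fun s o => hp _) (fun s o h => hdet s o a (Or.inl h)) hpa o (hjoint_le_marginal o)
  have hsum := sum_le_sum fun o (_ : o ∈ univ) => hterm o
  rw [← sum_mul, hweights, one_mul, sum_add_distrib] at hsum
  linarith

/-- extrinsic/intrinsic value lower bound: under the precise-agent
assumption, and provided the observation marginal `p_O(o)` is positive whenever
`p(o ∣ a) > 0`, `−log p_A(a)` is bounded below by negative extrinsic value minus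
intrinsic value (the expected information gain about states).  All summands
vanish where the probability weighting them vanishes, since they carry it as a
factor. -/
theorem stmt7 (S O A : Type*) [Fintype S] [Fintype O] [Fintype A]
    [Nonempty S] [Nonempty O] [Nonempty A]
    (f : S → O) (g : S → A)
    (p : S × O × A → ℝ) (hp : ∀ x, 0 ≤ p x) (hsum : ∑ x, p x = 1)
    (hdet : ∀ s o a, o ≠ f s ∨ a ≠ g s → p (s, o, a) = 0)
    (a : A) (hpa : 0 < ∑ s, ∑ o, p (s, o, a))
    (hO : ∀ o : O, 0 < (∑ s, p (s, o, a)) / (∑ s', ∑ o', p (s', o', a)) →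
      0 < ∑ s, ∑ a', p (s, o, a')) :
    -Real.log (∑ s, ∑ o, p (s, o, a)) ≥
      -(∑ o, ((∑ s, p (s, o, a)) / (∑ s', ∑ o', p (s', o', a))) *
          Real.log (∑ s, ∑ a', p (s, o, a')))
      - ∑ o, ((∑ s, p (s, o, a)) / (∑ s', ∑ o', p (s', o', a))) *
          (∑ s, (p (s, o, a) / (∑ s', p (s', o, a))) *
            Real.log ((p (s, o, a) / (∑ s', p (s', o, a))) /
              ((∑ o', p (s, o', a)) / (∑ s', ∑ o', p (s', o', a))))) :=
  stmt7_general S O A f g p hp hdet a hpa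
end
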